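/- arXiv:2102.10922 — 2 statements merged into one kernel-verified Lean document; each statement's English description precedes it below -/
import Mathlib

section
/- Let 0 ≤ R₁ < 1, 0 < R₂, 0 < ε < min{R₂², 1 − R₁²}, R₁,ε* ∈ (R₁, √(R₁² + ε)), and define D_ε := {x + iy ∈ ℂ² : ‖x‖ < R₁,ε*, ‖y‖² < ‖x‖² − (R₁² − R₂²) − ε} and G := {x + iy ∈ ℂ² : R₁ < ‖x‖ < 1, ‖y‖ < R₂}. Then the set S_ε := closure(∂D_ε \ (closure(D_ε) ∩ Π_ε)), where Π_ε := {z : Re(z₁² + z₂²) = R₁² − R₂² + ε}, is contained in G. -/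
open Complex

noncomputable def rePart {n : ℕ} (z : EuclideanSpace ℂ (Fin n)) : EuclideanSpace ℝ (Fin n) :=
  (WithLp.equiv 2 (Fin n → ℝ)).symm fun i => (z i).re

noncomputable def imPart {n : ℕ} (z : EuclideanSpace ℂ (Fin n)) : EuclideanSpace ℝ (Fin n) :=
  (WithLp.equiv 2 (Fin n → ℝ)).symm fun i => (z i).im

lemma normsq_eq (x : EuclideanSpace ℝ (Fin 2)) : ‖x‖ ^ 2 = x 0 ^ 2 + x 1 ^ 2 := by
  rw [EuclideanSpace.norm_eq, Real.sq_sqrt (by positivity)]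
  simp [Fin.sum_univ_two, Real.norm_eq_abs, sq_abs]

lemma rePart_apply (z : EuclideanSpace ℂ (Fin 2)) (i : Fin 2) : rePart z i = (z i).re := rfl
lemma imPart_apply (z : EuclideanSpace ℂ (Fin 2)) (i : Fin 2) : imPart z i = (z i).im := rfl

lemma re_sum_sq (z : EuclideanSpace ℂ (Fin 2)) :
    ((z 0) ^ 2 + (z 1) ^ 2).re = ‖rePart z‖ ^ 2 - ‖imPart z‖ ^ 2 := by
  rw [normsq_eq, normsq_eq, rePart_apply, rePart_apply, imPart_apply, imPart_apply]
  simp [sq, Complex.mul_re]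
  ring

lemma cont_rePart : Continuous (rePart (n := 2)) :=
  (PiLp.continuous_toLp 2 fun _ => ℝ).comp
    (continuous_pi fun i => Complex.continuous_re.comp
      ((continuous_apply i).comp (PiLp.continuous_ofLp 2 fun _ => ℂ)))

lemma cont_imPart : Continuous (imPart (n := 2)) :=
  (PiLp.continuous_toLp 2 fun _ => ℝ).comp
    (continuous_pi fun i => Complex.continuous_im.comp
      ((continuous_apply i).comp (PiLp.continuous_ofLp 2 fun _ => ℂ)))

theorem stmt_7 (R1 R2 ε R1star : ℝ) (hR1 : 0 ≤ R1) (hR1' : R1 < 1) (hR2 : 0 < R2)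
    (hε0 : 0 < ε) (hε1 : ε < min (R2 ^ 2) (1 - R1 ^ 2))
    (hstar1 : R1 < R1star) (hstar2 : R1star < Real.sqrt (R1 ^ 2 + ε))
    (Dε G Pie : Set (EuclideanSpace ℂ (Fin 2)))
    (hD : Dε = {z | ‖rePart z‖ < R1star ∧
        ‖imPart z‖ ^ 2 < ‖rePart z‖ ^ 2 - (R1 ^ 2 - R2 ^ 2) - ε})
    (hG : G = {z | R1 < ‖rePart z‖ ∧ ‖rePart z‖ < 1 ∧ ‖imPart z‖ < R2})
    (hPie : Pie = {z | ((z 0) ^ 2 + (z 1) ^ 2).re = R1 ^ 2 - R2 ^ 2 + ε}) :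
    closure (frontier Dε \ (closure Dε ∩ Pie)) ⊆ G := by
  have hε2 : ε < R2 ^ 2 := lt_of_lt_of_le hε1 (min_le_left _ _)
  have hε3 : ε < 1 - R1 ^ 2 := lt_of_lt_of_le hε1 (min_le_right _ _)
  have hstar0 : 0 ≤ R1star := le_of_lt (lt_of_le_of_lt hR1 hstar1)
  have hstarsq : R1star ^ 2 < R1 ^ 2 + ε := (Real.lt_sqrt hstar0).mp hstar2
  have ha : Continuous fun z : EuclideanSpace ℂ (Fin 2) => ‖rePart z‖ := cont_rePart.norm
  have hb : Continuous fun z : EuclideanSpace ℂ (Fin 2) => ‖imPart z‖ := cont_imPart.norm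
  -- Dε is open
  have hDopen : IsOpen Dε := by
    rw [hD]
    exact (isOpen_lt ha continuous_const).inter
      (isOpen_lt (hb.pow 2) (((ha.pow 2).sub continuous_const).sub continuous_const))
  -- closure Dε is contained in the closed set K
  have hKclosed : IsClosed {z : EuclideanSpace ℂ (Fin 2) |
      ‖rePart z‖ ≤ R1star ∧ ‖imPart z‖ ^ 2 ≤ ‖rePart z‖ ^ 2 - (R1 ^ 2 - R2 ^ 2) - ε} :=
    (isClosed_le ha continuous_const).inter
      (isClosed_le (hb.pow 2) (((ha.pow 2).sub continuous_const).sub continuous_const))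
  have hclos : closure Dε ⊆ {z : EuclideanSpace ℂ (Fin 2) |
      ‖rePart z‖ ≤ R1star ∧ ‖imPart z‖ ^ 2 ≤ ‖rePart z‖ ^ 2 - (R1 ^ 2 - R2 ^ 2) - ε} := by
    apply closure_minimal _ hKclosed
    rw [hD]
    exact fun z hz => ⟨le_of_lt hz.1, le_of_lt hz.2⟩
  -- the closed target set C
  have hCclosed : IsClosed {z : EuclideanSpace ℂ (Fin 2) |
      ‖rePart z‖ = R1star ∧ ‖imPart z‖ ^ 2 ≤ R1star ^ 2 - (R1 ^ 2 - R2 ^ 2) - ε} :=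
    (isClosed_eq ha continuous_const).inter (isClosed_le (hb.pow 2) continuous_const)
  have hsub : frontier Dε \ (closure Dε ∩ Pie) ⊆ {z : EuclideanSpace ℂ (Fin 2) |
      ‖rePart z‖ = R1star ∧ ‖imPart z‖ ^ 2 ≤ R1star ^ 2 - (R1 ^ 2 - R2 ^ 2) - ε} := by
    intro z hz
    have hzc : z ∈ closure Dε := frontier_subset_closure hz.1
    have hzK := hclos hzc
    have hznD : z ∉ Dε := by
      have := hz.1
      rw [hDopen.frontier_eq] at this
      exact this.2
    have hzP : z ∉ Pie := fun h => hz.2 ⟨hzc, h⟩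
    have hzP' : ‖rePart z‖ ^ 2 - ‖imPart z‖ ^ 2 ≠ R1 ^ 2 - R2 ^ 2 + ε := by
      rw [hPie] at hzP
      rw [← re_sum_sq]
      exact hzP
    have hlt : ‖imPart z‖ ^ 2 < ‖rePart z‖ ^ 2 - (R1 ^ 2 - R2 ^ 2) - ε := by
      rcases lt_or_eq_of_le hzK.2 with h | h
      · exact h
      · exact absurd (by linarith [h] : ‖rePart z‖ ^ 2 - ‖imPart z‖ ^ 2 = R1 ^ 2 - R2 ^ 2 + ε)
          hzP'
    have heq : ‖rePart z‖ = R1star := by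
      rw [hD] at hznD
      by_contra hne
      exact hznD ⟨lt_of_le_of_ne hzK.1 hne, hlt⟩
    exact ⟨heq, by rw [← heq]; exact hzK.2⟩
  refine subset_trans (closure_minimal hsub hCclosed) ?_
  intro z hz
  rw [hG]
  obtain ⟨h1, h2⟩ := hz
  have hb0 : 0 ≤ ‖imPart z‖ := norm_nonneg _
  refine ⟨by rw [h1]; exact hstar1, ?_, ?_⟩
  · rw [h1]; nlinarith
  · nlinarith
end

section
/- Let n ≥ 2, 0 ≤ R₁ < 1, 0 < R₂, E = {x + iy ∈ ℂⁿ : ‖x‖ < 1, ‖y‖ < R₂, ‖y‖² < ‖x‖² − (R₁² − R₂²)}, and G = {x + iy : R₁ < ‖x‖ < 1, ‖y‖ < R₂}. Then E is path-connected, and G ⊆ E. -/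
open Complex

noncomputable def tubeG (n : ℕ) (R1 R2 : ℝ) : Set (EuclideanSpace ℂ (Fin n)) :=
  {z | R1 < ‖rePart z‖ ∧ ‖rePart z‖ < 1 ∧ ‖imPart z‖ < R2}

noncomputable def mkC {n : ℕ} (x y : EuclideanSpace ℝ (Fin n)) : EuclideanSpace ℂ (Fin n) :=
  (WithLp.equiv 2 (Fin n → ℂ)).symm fun i => ⟨x i, y i⟩

lemma rePart_mkC {n : ℕ} (x y : EuclideanSpace ℝ (Fin n)) : rePart (mkC x y) = x := rfl

lemma imPart_mkC {n : ℕ} (x y : EuclideanSpace ℝ (Fin n)) : imPart (mkC x y) = y := rfl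

lemma mkC_rePart_imPart {n : ℕ} (z : EuclideanSpace ℂ (Fin n)) :
    mkC (rePart z) (imPart z) = z := rfl

lemma continuous_mkC {n : ℕ} {X : Type*} [TopologicalSpace X]
    {f g : X → EuclideanSpace ℝ (Fin n)} (hf : Continuous f) (hg : Continuous g) :
    Continuous fun a => mkC (f a) (g a) := by
  apply (PiLp.continuous_toLp 2 (fun _ : Fin n => ℂ)).comp
  apply continuous_pi
  intro i
  have hf' : Continuous fun a => f a i :=
    (continuous_apply i).comp ((PiLp.continuous_ofLp 2 _).comp hf)
  have hg' : Continuous fun a => g a i :=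
    (continuous_apply i).comp ((PiLp.continuous_ofLp 2 _).comp hg)
  have : (fun a => (⟨f a i, g a i⟩ : ℂ)) = fun a => (f a i : ℂ) + (g a i : ℂ) * I := by
    funext a
    exact (Complex.mk_eq_add_mul_I _ _)
  rw [this]
  continuity

set_option maxHeartbeats 1000000 in
theorem stmt_15 (n : ℕ) (hn : 2 ≤ n) (R1 R2 : ℝ) (hR1 : 0 ≤ R1) (hR1' : R1 < 1) (hR2 : 0 < R2)
    (E : Set (EuclideanSpace ℂ (Fin n)))
    (hE : E = {z | ‖rePart z‖ < 1 ∧ ‖imPart z‖ < R2 ∧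
        ‖imPart z‖ ^ 2 < ‖rePart z‖ ^ 2 - (R1 ^ 2 - R2 ^ 2)}) :
    IsPathConnected E ∧ tubeG n R1 R2 ⊆ E := by
  have hsub : tubeG n R1 R2 ⊆ E := by
    rintro z ⟨h1, h2, h3⟩
    rw [hE]
    refine ⟨h2, h3, ?_⟩
    have h1' : R1 ^ 2 < ‖rePart z‖ ^ 2 := by
      apply pow_lt_pow_left₀ h1 hR1
      norm_num
    have h3' : ‖imPart z‖ ^ 2 < R2 ^ 2 := by
      apply pow_lt_pow_left₀ h3 (norm_nonneg _)
      norm_num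
    nlinarith
  refine ⟨?_, hsub⟩
  -- basepoint
  set ρ : ℝ := (R1 + 1) / 2 with hρdef
  have hρ1 : R1 < ρ := by simp [hρdef]; linarith
  have hρ2 : ρ < 1 := by simp [hρdef]; linarith
  have hρ0 : 0 < ρ := lt_of_le_of_lt hR1 hρ1
  set e : EuclideanSpace ℝ (Fin n) := EuclideanSpace.single (⟨0, by omega⟩ : Fin n) ρ with he
  have hne : ‖e‖ = ρ := by
    rw [he, EuclideanSpace.norm_single, Real.norm_eq_abs, _root_.abs_of_pos hρ0]
  have hmemE : ∀ x : EuclideanSpace ℝ (Fin n),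
      ‖x‖ < 1 → R1 ^ 2 - R2 ^ 2 < ‖x‖ ^ 2 → mkC x 0 ∈ E := by
    intro x h1 h2
    rw [hE]
    refine ⟨by rwa [rePart_mkC], ?_, ?_⟩
    · rw [imPart_mkC, norm_zero]; exact hR2
    · rw [imPart_mkC, rePart_mkC, norm_zero]; simpa using h2
  have hbase : mkC e 0 ∈ E := by
    apply hmemE _ (by rwa [hne])
    rw [hne]
    nlinarith
  have hrank : 1 < Module.rank ℝ (EuclideanSpace ℝ (Fin n)) := by
    rw [← Module.finrank_eq_rank, finrank_euclideanSpace_fin]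
    exact_mod_cast lt_of_lt_of_le one_lt_two (by exact_mod_cast hn)
  -- key: every point is joined to the basepoint
  refine ⟨mkC e 0, hbase, ?_⟩
  intro z hz
  rw [hE] at hz
  obtain ⟨hz1, hz2, hz3⟩ := hz
  set x := rePart z with hx
  set y := imPart z with hy
  -- step 1: shrink imaginary part to 0
  have step1 : JoinedIn E (mkC x 0) z := by
    apply JoinedIn.symm
    apply JoinedIn.ofLine (f := fun t : ℝ => mkC x ((1 - t) • y))
    · exact (continuous_mkC continuous_const ((continuous_const.sub continuous_id).smul
        continuous_const)).continuousOn
    · show mkC x ((1 - (0:ℝ)) • y) = z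
      rw [show (1:ℝ) - 0 = 1 by ring, one_smul]
      exact mkC_rePart_imPart z
    · show mkC x ((1 - (1:ℝ)) • y) = mkC x 0
      rw [show (1:ℝ) - 1 = 0 by ring, zero_smul]
    · rintro w ⟨t, ⟨ht0, ht1⟩, rfl⟩
      rw [hE]
      have hnorm : ‖(1 - t) • y‖ ≤ ‖y‖ := by
        rw [norm_smul, Real.norm_eq_abs, _root_.abs_of_nonneg (by linarith)]
        nlinarith [norm_nonneg y]
      refine ⟨by rwa [rePart_mkC], ?_, ?_⟩
      · rw [imPart_mkC]
        exact lt_of_le_of_lt hnorm hz2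
      · rw [imPart_mkC, rePart_mkC]
        have := pow_le_pow_left₀ (norm_nonneg _) hnorm 2
        linarith
  -- step 2: move real part to the sphere of radius ρ, then along the sphere
  by_cases hx0 : x = 0
  · -- straight line from 0 to e
    have step2 : JoinedIn E (mkC e 0) (mkC x 0) := by
      apply JoinedIn.symm
      apply JoinedIn.ofLine (f := fun t : ℝ => mkC (t • e) 0)
      · exact (continuous_mkC (continuous_id.smul continuous_const)
          continuous_const).continuousOn
      · show mkC ((0:ℝ) • e) 0 = mkC x 0
        rw [zero_smul, hx0]
      · show mkC ((1:ℝ) • e) 0 = mkC e 0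
        rw [one_smul]
      · rintro w ⟨t, ⟨ht0, ht1⟩, rfl⟩
        have h0 : R1 ^ 2 - R2 ^ 2 < 0 := by
          rw [hx0, norm_zero] at hz3
          nlinarith [sq_nonneg ‖y‖]
        apply hmemE
        · rw [norm_smul, Real.norm_eq_abs, _root_.abs_of_nonneg ht0, hne]
          nlinarith
        · nlinarith [sq_nonneg ‖t • e‖]
    exact step2.trans step1
  · have hxn : 0 < ‖x‖ := norm_pos_iff.mpr hx0
    set c : ℝ := ρ / ‖x‖ with hc
    have hc0 : 0 < c := div_pos hρ0 hxn
    have hcx : ‖c • x‖ = ρ := by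
      rw [norm_smul, Real.norm_eq_abs, _root_.abs_of_pos hc0, hc]
      field_simp
    have hx2 : R1 ^ 2 - R2 ^ 2 < ‖x‖ ^ 2 := by linarith [sq_nonneg ‖y‖]
    -- radial path from c • x to x
    have step3 : JoinedIn E (mkC (c • x) 0) (mkC x 0) := by
      apply JoinedIn.ofLine (f := fun t : ℝ => mkC (((1 - t) * c + t) • x) 0)
      · refine (continuous_mkC (Continuous.smul (?_ : Continuous fun t : ℝ => (1 - t) * c + t) continuous_const)
          continuous_const).continuousOn
        exact ((continuous_const.sub continuous_id).mul continuous_const).add continuous_id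
      · show mkC (((1 - (0:ℝ)) * c + 0) • x) 0 = mkC (c • x) 0
        rw [show (1 - (0:ℝ)) * c + 0 = c by ring]
      · show mkC (((1 - (1:ℝ)) * c + 1) • x) 0 = mkC x 0
        rw [show (1 - (1:ℝ)) * c + 1 = 1 by ring, one_smul]
      · rintro w ⟨t, ⟨ht0, ht1⟩, rfl⟩
        have hs0 : 0 < (1 - t) * c + t := by
          rcases eq_or_lt_of_le ht0 with h | h
          · rw [← h]; simpa using hc0
          · nlinarith [mul_nonneg (by linarith : (0:ℝ) ≤ 1 - t) hc0.le]
        have hsn : ‖((1 - t) * c + t) • x‖ = ((1 - t) * c + t) * ‖x‖ := by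
          rw [norm_smul, Real.norm_eq_abs, _root_.abs_of_pos hs0]
        have hub : ((1 - t) * c + t) * ‖x‖ ≤ max ρ ‖x‖ := by
          have h1 : (1 - t) * (c * ‖x‖) ≤ (1 - t) * max ρ ‖x‖ := by
            apply mul_le_mul_of_nonneg_left _ (by linarith)
            rw [hc]; field_simp; exact le_max_left _ _
          have h2 : t * ‖x‖ ≤ t * max ρ ‖x‖ :=
            mul_le_mul_of_nonneg_left (le_max_right _ _) ht0
          nlinarith
        have hlb : min ρ ‖x‖ ≤ ((1 - t) * c + t) * ‖x‖ := by
          have h1 : (1 - t) * min ρ ‖x‖ ≤ (1 - t) * (c * ‖x‖) := by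
            apply mul_le_mul_of_nonneg_left _ (by linarith)
            rw [hc]; field_simp; exact min_le_left _ _
          have h2 : t * min ρ ‖x‖ ≤ t * ‖x‖ :=
            mul_le_mul_of_nonneg_left (min_le_right _ _) ht0
          nlinarith
        apply hmemE
        · rw [hsn]
          exact lt_of_le_of_lt hub (max_lt hρ2 hz1)
        · rw [hsn]
          have hmin0 : 0 < min ρ ‖x‖ := lt_min hρ0 hxn
          have hmin2 : R1 ^ 2 - R2 ^ 2 < (min ρ ‖x‖) ^ 2 := by
            rcases min_cases ρ ‖x‖ with ⟨h, _⟩ | ⟨h, _⟩ <;> rw [h]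
            · nlinarith
            · exact hx2
          nlinarith
    -- along the sphere of radius ρ from e to c • x
    have step4 : JoinedIn E (mkC e 0) (mkC (c • x) 0) := by
      have hsph : JoinedIn (Metric.sphere (0 : EuclideanSpace ℝ (Fin n)) ρ) e (c • x) := by
        apply (isPathConnected_sphere hrank 0 hρ0.le).joinedIn
        · rw [mem_sphere_iff_norm, sub_zero]; exact hne
        · rw [mem_sphere_iff_norm, sub_zero]; exact hcx
      obtain ⟨γ, hγ⟩ := hsph
      refine ⟨γ.map (continuous_mkC continuous_id continuous_const), fun t => ?_⟩
      simp only [Path.map_coe, Function.comp_apply, id_eq]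
      have hγt := hγ t
      rw [mem_sphere_iff_norm, sub_zero] at hγt
      apply hmemE _ (by rw [hγt]; exact hρ2)
      rw [hγt]; nlinarith
    exact (step4.trans step3).trans step1
end
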